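/- arXiv:2002.10589 — 3 statements merged into one kernel-verified Lean document; each statement's English description precedes it below -/
import Mathlib

section
/- Let G be a group, p a prime, and k, l ≥ 1 integers. If f is an automorphism of G such that f(x)·x⁻¹ ∈ G^S_{k+1} for every x ∈ G, then for every x ∈ G^S_l one has f(x)·x⁻¹ ∈ G^S_{k+l}. -/
open scoped commutatorElement in
/-- The Stallings mod-`p` central series: `G^S_1 = G` and
`G^S_{k+1} = [G, G^S_k]·(G^S_k)^p`, the subgroup generated by all commutators `⁅g, y⁆`
with `g ∈ G`, `y ∈ G^S_k`, together with all `p`-th powers `y^p` with `y ∈ G^S_k`.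
(The value at `0` is a junk value, set to `⊤`.) -/
def stallings (p : ℕ) (G : Type*) [Group G] : ℕ → Subgroup G
  | 0 => ⊤
  | 1 => ⊤
  | (k + 2) =>
    Subgroup.closure
      {x : G | (∃ g : G, ∃ y ∈ stallings p G (k + 1), x = ⁅g, y⁆) ∨
        ∃ y ∈ stallings p G (k + 1), x = y ^ p}

/-- The Zassenhaus mod-`p` central series: `G^Z_k` is the subgroup generated by all
elements `y ^ (p ^ j)` with `y ∈ G_i` (the `i`-th term of the lower central series,
`G_1 = G`), `j ≥ 0` and `i·p^j ≥ k`. -/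
def zassenhaus (p : ℕ) (G : Type*) [Group G] (k : ℕ) : Subgroup G :=
  Subgroup.closure
    {x : G | ∃ i j : ℕ, 1 ≤ i ∧ k ≤ i * p ^ j ∧
      ∃ y ∈ (⊤ : Subgroup G).lowerCentralSeries (i - 1), x = y ^ p ^ j}

/-!
The series is characteristic and satisfies `⁅G^S_a, G^S_b⁆ ≤ G^S_{a+b}`: by induction on `b`,
the three subgroups lemma handles the commutator generators of `G^S_{b+1}`, and for a power
generator `⁅x, y ^ p⁆ ≡ ⁅x, y⁆ ^ p` modulo `G^S_{a+b+1}`, because `⁅x, y⁆` is central there.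

For the theorem induct on `l`, and write `f x = a x · x` with `a x ∈ G^S_{k+1}`. Modulo
`N = G^S_{k+l+1}`, the elements `a y` with `y ∈ G^S_l` are central by induction, and `a g`
commutes with `y` and with `⁅g, y⁆`. Hence `f` fixes the generators `⁅g, y⁆` and `y ^ p` of
`G^S_{l+1}` modulo `N` (for the latter since `(a y) ^ p ∈ N`), so it fixes all of `G^S_{l+1}`.
-/

open scoped commutatorElement

open Subgroup QuotientGroup

section Commutators

variable {G : Type*} [Group G]

theorem commutatorElement_mul_right_of_commute {x y b : G} (hx : Commute b x)
    (hy : Commute b y) : ⁅x, b * y⁆ = ⁅x, y⁆ := by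
  have hb : Commute b ⁅x, y⁆ := by
    rw [commutatorElement_def]
    exact ((hx.mul_right hy).mul_right hx.inv_right).mul_right hy.inv_right
  rw [commutatorElement_mul_right_eq_mul_conj, commutatorElement_eq_one_iff_commute.2 hx.symm,
    one_mul, hb.eq, mul_inv_cancel_right]

theorem commutatorElement_mul_left_of_commute {a g y : G} (hy : Commute a y)
    (hgy : Commute a ⁅g, y⁆) : ⁅a * g, y⁆ = ⁅g, y⁆ := by
  rw [commutatorElement_mul_left_eq_conj_mul, commutatorElement_eq_one_iff_commute.2 hy,
    mul_one, hgy.eq, mul_inv_cancel_right]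

theorem commutatorElement_pow_right_of_commute {u v : G} (h : Commute ⁅u, v⁆ v) (n : ℕ) :
    ⁅u, v ^ n⁆ = ⁅u, v⁆ ^ n := by
  have hconj : u * v * u⁻¹ = ⁅u, v⁆ * v := by rw [commutatorElement_def, inv_mul_cancel_right]
  rw [commutatorElement_def u, ← conj_pow, hconj, h.mul_pow, mul_inv_cancel_right]

theorem commute_mk'_of_commutatorElement_mem {N : Subgroup G} [N.Normal] {x y : G}
    (h : ⁅x, y⁆ ∈ N) : Commute (mk' N x) (mk' N y) := by
  rw [← commutatorElement_eq_one_iff_commute, ← map_commutatorElement, ← MonoidHom.mem_ker,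
    ker_mk']
  exact h

theorem commutator_commutator_le_of_rotate {H₁ H₂ H₃ N : Subgroup G} [N.Normal]
    (h1 : ⁅⁅H₂, H₃⁆, H₁⁆ ≤ N) (h2 : ⁅⁅H₃, H₁⁆, H₂⁆ ≤ N) : ⁅⁅H₁, H₂⁆, H₃⁆ ≤ N := by
  rw [← ker_mk' N, ← Subgroup.map_eq_bot_iff, map_commutator, map_commutator] at h1 h2 ⊢
  exact commutator_commutator_eq_bot_of_rotate h1 h2

theorem commutator_closure_le {H N : Subgroup G} [N.Normal] {S : Set G}
    (h : ∀ x ∈ H, ∀ s ∈ S, ⁅x, s⁆ ∈ N) : ⁅H, closure S⁆ ≤ N := by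
  rw [← ker_mk' N, ← Subgroup.map_eq_bot_iff, map_commutator, commutator_comm,
    commutator_eq_bot_iff_le_centralizer, MonoidHom.map_closure, closure_le]
  rintro _ ⟨s, hs, rfl⟩
  rw [SetLike.mem_coe, mem_centralizer_iff]
  rintro _ ⟨x, hx, rfl⟩
  exact (commute_mk'_of_commutatorElement_mem (h x hx s hs)).eq

end Commutators

namespace Stallings

variable (p : ℕ) {G : Type*} [Group G]

theorem commutatorElement_mem_succ (g : G) {n : ℕ} {y : G} (hy : y ∈ stallings p G (n + 1)) :
    ⁅g, y⁆ ∈ stallings p G (n + 2) :=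
  subset_closure (Or.inl ⟨g, y, hy, rfl⟩)

theorem pow_mem_succ {n : ℕ} {y : G} (hy : y ∈ stallings p G (n + 1)) :
    y ^ p ∈ stallings p G (n + 2) :=
  subset_closure (Or.inr ⟨y, hy, rfl⟩)

theorem map_le {H : Type*} [Group H] (φ : G →* H) :
    ∀ n, (stallings p G n).map φ ≤ stallings p H n
  | 0 | 1 => le_top
  | n + 2 => by
    refine (MonoidHom.map_closure _ _).trans_le ((closure_le _).2 ?_)
    rintro _ ⟨_, ⟨g, y, hy, rfl⟩ | ⟨y, hy, rfl⟩, rfl⟩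
    · rw [map_commutatorElement]
      exact commutatorElement_mem_succ p (φ g) (map_le φ (n + 1) (mem_map_of_mem φ hy))
    · rw [map_pow]
      exact pow_mem_succ p (map_le φ (n + 1) (mem_map_of_mem φ hy))

instance characteristic (n : ℕ) : (stallings p G n).Characteristic :=
  characteristic_iff_map_le.2 fun φ => map_le p φ.toMonoidHom n

theorem succ_le : ∀ n, stallings p G (n + 1) ≤ stallings p G n
  | 0 => le_top
  | n + 1 => by
    refine (closure_le _).2 ?_
    rintro _ (⟨g, y, hy, rfl⟩ | ⟨y, hy, rfl⟩)
    · rw [commutatorElement_def]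
      exact mul_mem (Normal.conj_mem inferInstance y hy g) (inv_mem hy)
    · exact Subgroup.pow_mem _ hy p

theorem antitone : Antitone (stallings p G) :=
  antitone_nat_of_succ_le (succ_le p)

theorem commutator_top_le : ∀ a, ⁅stallings p G a, ⊤⁆ ≤ stallings p G (a + 1)
  | 0 => le_top
  | a + 1 => commutator_le.2 fun x hx g _ => by
    rw [← commutatorElement_inv]
    exact inv_mem (commutatorElement_mem_succ p g hx)

theorem commutator_le_add : ∀ b a, ⁅stallings p G a, stallings p G b⁆ ≤ stallings p G (a + b)
  | 0, _ => commutator_le_left _ _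
  | 1, a => commutator_top_le p a
  | b + 2, a => commutator_closure_le fun x hx => by
    rintro _ (⟨g, y, hy, rfl⟩ | ⟨y, hy, rfl⟩)
    · have hthree : ⁅⁅(⊤ : Subgroup G), stallings p G (b + 1)⁆, stallings p G a⁆ ≤
          stallings p G (a + (b + 2)) := by
        refine commutator_commutator_le_of_rotate ?_ ?_
        · exact (commutator_mono ((commutator_comm _ _).le.trans (commutator_le_add (b + 1) a))
            le_rfl).trans (commutator_top_le p _)
        · exact (commutator_mono (commutator_top_le p a) le_rfl).trans
            ((commutator_le_add (b + 1) (a + 1)).trans (antitone p (by omega)))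
      exact (commutator_comm _ _).le.trans hthree
        (commutator_mem_commutator hx (commutator_mem_commutator (mem_top g) hy))
    · have hxy : ⁅x, y⁆ ∈ stallings p G (a + (b + 1)) :=
        commutator_le_add (b + 1) a (commutator_mem_commutator hx hy)
      have hc := commute_mk'_of_commutatorElement_mem (N := stallings p G (a + (b + 2)))
        (commutator_top_le p _ (commutator_mem_commutator hxy (mem_top y)))
      rw [map_commutatorElement] at hc
      rw [← ker_mk' (stallings p G _), MonoidHom.mem_ker, map_commutatorElement, map_pow,
        commutatorElement_pow_right_of_commute hc, ← map_commutatorElement, ← map_pow,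
        ← MonoidHom.mem_ker, ker_mk']
      exact pow_mem_succ p hxy

theorem commute_mk'_of_mem {i j n : ℕ} {x y : G} (hx : x ∈ stallings p G i)
    (hy : y ∈ stallings p G j) (h : n ≤ i + j) :
    Commute (mk' (stallings p G n) x) (mk' (stallings p G n) y) :=
  commute_mk'_of_commutatorElement_mem
    (antitone p h (commutator_le_add p j i (commutator_mem_commutator hx hy)))

theorem apply_mul_inv_mem (f : G →* G) {k : ℕ}
    (hf : ∀ x, f x * x⁻¹ ∈ stallings p G (k + 1)) :
    ∀ l, ∀ x ∈ stallings p G (l + 1), f x * x⁻¹ ∈ stallings p G (k + l + 1)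
  | 0 => fun x _ => hf x
  | l + 1 => by
    set π := mk' (stallings p G (k + (l + 1) + 1))
    have decompose (z : G) : π (f z) = π (f z * z⁻¹) * π z := by
      rw [← map_mul, inv_mul_cancel_right]
    have central {y : G} (hy : y ∈ stallings p G (l + 1)) (z : G) :
        Commute (π (f y * y⁻¹)) (π z) :=
      commute_mk'_of_mem p (apply_mul_inv_mem f hf l y hy) (j := 1) (mem_top z) le_rfl
    suffices stallings p G (l + 2) ≤ (π.comp f).eqLocus π from fun x hx => by
      simpa only [div_eq_mul_inv] using eq_iff_div_mem.1 (this hx)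
    refine (closure_le _).2 ?_
    rintro _ (⟨g, y, hy, rfl⟩ | ⟨y, hy, rfl⟩)
    · have hay : Commute (π (f g * g⁻¹)) (π y) := commute_mk'_of_mem p (hf g) hy (by omega)
      have hagy : Commute (π (f g * g⁻¹)) ⁅π g, π y⁆ := by
        simpa only [map_commutatorElement] using
          commute_mk'_of_mem p (hf g) (commutatorElement_mem_succ p g hy) (by omega)
      calc π (f ⁅g, y⁆) = ⁅π (f g), π (f y * y⁻¹) * π y⁆ := by
            rw [map_commutatorElement, map_commutatorElement, decompose y]
        _ = ⁅π (f g * g⁻¹) * π g, π y⁆ := by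
            rw [commutatorElement_mul_right_of_commute (central hy _) (central hy _), decompose g]
        _ = π ⁅g, y⁆ := by
            rw [commutatorElement_mul_left_of_commute hay hagy, map_commutatorElement]
    · have hpow : π ((f y * y⁻¹) ^ p) = 1 := by
        rw [← MonoidHom.mem_ker, ker_mk']
        exact pow_mem_succ p (apply_mul_inv_mem f hf l y hy)
      change π (f (y ^ p)) = π (y ^ p)
      rw [map_pow, map_pow, decompose y, (central hy y).mul_pow, ← map_pow, hpow, one_mul,
        map_pow]

end Stallings

theorem stallings_IA_action_general (G : Type*) [Group G] (p : ℕ)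
    (k l : ℕ) (hl : 1 ≤ l) (f : MulAut G)
    (hf : ∀ x : G, f x * x⁻¹ ∈ stallings p G (k + 1)) :
    ∀ x ∈ stallings p G l, f x * x⁻¹ ∈ stallings p G (k + l) := by
  obtain ⟨l, rfl⟩ := Nat.exists_eq_add_of_le' hl
  exact Stallings.apply_mul_inv_mem p f.toMonoidHom hf l

theorem stallings_IA_action (G : Type*) [Group G] (p : ℕ) (hp : p.Prime)
    (k l : ℕ) (hk : 1 ≤ k) (hl : 1 ≤ l) (f : MulAut G)
    (hf : ∀ x : G, f x * x⁻¹ ∈ stallings p G (k + 1)) :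
    ∀ x ∈ stallings p G l, f x * x⁻¹ ∈ stallings p G (k + l) :=
  stallings_IA_action_general G p k l hl f hf
end

section
/- Let p be an odd prime and Γ a free group of finite rank, and let π : Γ/Γ^Z_3 → Γ/Γ^Z_2 be the canonical projection. Then there exists a group homomorphism s : Aut(Γ/Γ^Z_2) → Aut(Γ/Γ^Z_3) such that π ∘ s(φ) = φ ∘ π for every automorphism φ of Γ/Γ^Z_2; that is, the extension 0 → Hom(Γ/Γ^Z_2, Γ^Z_2/Γ^Z_3) → Aut(Γ/Γ^Z_3) → Aut(Γ/Γ^Z_2) → 1 splits. -/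
theorem closure_normal_of_conj {G : Type*} [Group G] {s : Set G}
    (h : ∀ g : G, ∀ x ∈ s, g * x * g⁻¹ ∈ s) : (Subgroup.closure s).Normal := by
  constructor
  intro n hn g
  have key : Subgroup.closure s ≤
      Subgroup.comap (MulAut.conj g).toMonoidHom (Subgroup.closure s) := by
    rw [Subgroup.closure_le]
    intro x hx
    have : (MulAut.conj g).toMonoidHom x ∈ Subgroup.closure s :=
      Subgroup.subset_closure (by simpa [MulAut.conj_apply] using h g x hx)
    exact this
  have := key hn
  rw [Subgroup.mem_comap] at this
  simpa [MulAut.conj_apply] using this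

instance zassenhaus_normal (p : ℕ) (G : Type*) [Group G] (k : ℕ) :
    (zassenhaus p G k).Normal := by
  apply closure_normal_of_conj
  rintro g x ⟨i, j, hi, hk, y, hy, rfl⟩
  exact ⟨i, j, hi, hk, g * y * g⁻¹,
    (Subgroup.lowerCentralSeries_normal ⊤ (i-1)).conj_mem y hy g, (conj_pow ..).symm⟩

theorem zassenhaus_antitone (p : ℕ) (G : Type*) [Group G] :
    Antitone (zassenhaus p G) := by
  intro a b hab
  apply Subgroup.closure_mono
  rintro x ⟨i, j, hi, hk, y, hy, rfl⟩
  exact ⟨i, j, hi, le_trans hab hk, y, hy, rfl⟩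

def zassenhausProj (p : ℕ) (G : Type*) [Group G] (k k' : ℕ) (h : k ≤ k') :
    (G ⧸ zassenhaus p G k') →* (G ⧸ zassenhaus p G k) :=
  QuotientGroup.map _ _ (MonoidHom.id G) (fun _ hx => zassenhaus_antitone p G h hx)


/-! For odd `p ≥ 3` the group `Γ/Γ^Z_3` has class two and exponent `p`, so Baer's trick
`x + y := x y ⁅y, x⁆^(1/2)` turns it into an abelian group of exponent `p` on which every group
endomorphism acts additively. Sending the generators of the elementary abelian group `Γ/Γ^Z_2` to
those of `Γ/Γ^Z_3` therefore extends to a homomorphism into this abelian group: a canonical lift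
`λ : Γ/Γ^Z_2 → Γ/Γ^Z_3` with `π ∘ λ = id`. The lift of `φ` sends each generator `x` to
`λ (φ (π x))`; being additive, it satisfies `s(φ) ∘ λ = λ ∘ φ`, which makes `φ ↦ s(φ)`
multiplicative. -/

open scoped commutatorElement

section ClassTwo

variable {K : Type*} [Group K]

theorem commutatorElement_mul_left_of_central (hc : ∀ x y z : K, Commute ⁅x, y⁆ z) (x y z : K) :
    ⁅x * y, z⁆ = ⁅x, z⁆ * ⁅y, z⁆ := by
  rw [commutatorElement_mul_left_eq_conj_mul, (hc y z x).symm.eq, mul_inv_cancel_right,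
    (hc y z _).eq]

theorem commutatorElement_mul_right_of_central (hc : ∀ x y z : K, Commute ⁅x, y⁆ z) (x y z : K) :
    ⁅x, y * z⁆ = ⁅x, y⁆ * ⁅x, z⁆ := by
  rw [commutatorElement_mul_right_eq_mul_conj, mul_assoc _ y, (hc x z y).symm.eq,
    ← mul_assoc, mul_inv_cancel_right]

theorem commute_commutatorElement_of_lowerCentralSeries_two_eq_bot
    (hK : (⊤ : Subgroup K).lowerCentralSeries 2 = ⊥) (x y z : K) : Commute ⁅x, y⁆ z :=
  commutatorElement_eq_one_iff_commute.mp <| Subgroup.mem_bot.mp <| hK ▸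
    Subgroup.commutator_mem_commutator
      (Subgroup.commutator_mem_commutator (Subgroup.mem_top x) (Subgroup.mem_top y))
      (Subgroup.mem_top z)

end ClassTwo

/-- The hypotheses of Baer's correspondence, with `c ^ h` in the role of `c ^ (1/2)`. -/
class IsBaerGroup (K : Type*) [Group K] (h : ℕ) : Prop where
  commute_commutatorElement (x y z : K) : Commute ⁅x, y⁆ z
  commutatorElement_pow_two_mul (x y : K) : ⁅x, y⁆ ^ (2 * h) = ⁅x, y⁆

/-- A copy of `K`, to carry Baer's sum `x + y = x * y * ⁅y, x⁆ ^ h`. -/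
def Baer (K : Type*) (_h : ℕ) : Type _ := K

namespace Baer

variable {K L : Type*} [Group K] [Group L] {h : ℕ}

def toBaer : K ≃ Baer K h := Equiv.refl K

instance : Zero (Baer K h) := ⟨toBaer 1⟩

instance : Add (Baer K h) :=
  ⟨fun x y => toBaer (toBaer.symm x * toBaer.symm y * ⁅toBaer.symm y, toBaer.symm x⁆ ^ h)⟩

instance : Neg (Baer K h) := ⟨fun x => toBaer (toBaer.symm x)⁻¹⟩

@[simp] theorem toBaer_symm_zero : toBaer.symm (0 : Baer K h) = 1 := rfl

theorem toBaer_symm_add (x y : Baer K h) :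
    toBaer.symm (x + y) = toBaer.symm x * toBaer.symm y * ⁅toBaer.symm y, toBaer.symm x⁆ ^ h :=
  rfl

@[simp] theorem toBaer_symm_neg (x : Baer K h) : toBaer.symm (-x) = (toBaer.symm x)⁻¹ := rfl

theorem toBaer_mul_of_commute {x y : K} (hxy : Commute x y) :
    toBaer (x * y) = (toBaer x + toBaer y : Baer K h) :=
  toBaer.symm.injective (by simp [toBaer_symm_add, hxy.symm.commutator_eq])

section

variable [IsBaerGroup K h]

theorem baer_add_assoc (x y z : K) :
    x * y * ⁅y, x⁆ ^ h * z * ⁅z, x * y * ⁅y, x⁆ ^ h⁆ ^ h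
      = x * (y * z * ⁅z, y⁆ ^ h) * ⁅y * z * ⁅z, y⁆ ^ h, x⁆ ^ h := by
  have hc := IsBaerGroup.commute_commutatorElement (K := K) h
  have left : x * y * ⁅y, x⁆ ^ h * z * ⁅z, x * y * ⁅y, x⁆ ^ h⁆ ^ h
      = x * y * z * (⁅y, x⁆ ^ h * (⁅z, x⁆ ^ h * ⁅z, y⁆ ^ h)) := by
    rw [commutatorElement_mul_right_of_central hc, commutatorElement_mul_right_of_central hc,
      ((hc _ _ z).pow_left h).symm.commutator_eq, mul_one, (hc _ _ _).mul_pow,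
      mul_assoc _ (_ ^ h), ((hc _ _ z).pow_left h).eq]
    group
  have right : x * (y * z * ⁅z, y⁆ ^ h) * ⁅y * z * ⁅z, y⁆ ^ h, x⁆ ^ h
      = x * y * z * (⁅z, y⁆ ^ h * (⁅y, x⁆ ^ h * ⁅z, x⁆ ^ h)) := by
    rw [commutatorElement_mul_left_of_central hc, commutatorElement_mul_left_of_central hc,
      ((hc _ _ x).pow_left h).commutator_eq, mul_one, (hc _ _ _).mul_pow]
    group
  rw [left, right, ((hc z y _).pow_left h).eq]
  group

theorem baer_add_comm (x y : K) : x * y * ⁅y, x⁆ ^ h = y * x * ⁅x, y⁆ ^ h := by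
  have hc := IsBaerGroup.commute_commutatorElement (K := K) h
  rw [← commutatorElement_inv, inv_pow]
  calc x * y * (⁅x, y⁆ ^ h)⁻¹ = ⁅x, y⁆ * (y * x) * (⁅x, y⁆ ^ h)⁻¹ := by group
    _ = y * x * (⁅x, y⁆ * (⁅x, y⁆ ^ h)⁻¹) := by rw [(hc x y _).eq, mul_assoc]
    _ = y * x * (⁅x, y⁆ ^ (2 * h) * (⁅x, y⁆ ^ h)⁻¹) := by
      rw [IsBaerGroup.commutatorElement_pow_two_mul]
    _ = y * x * ⁅x, y⁆ ^ h := by rw [two_mul, pow_add]; group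

instance : AddCommGroup (Baer K h) where
  add_assoc x y z := toBaer.symm.injective (by simpa [toBaer_symm_add] using baer_add_assoc _ _ _)
  zero_add x := toBaer.symm.injective (by simp [toBaer_symm_add])
  add_zero x := toBaer.symm.injective (by simp [toBaer_symm_add])
  neg_add_cancel x := toBaer.symm.injective
    (by simp [toBaer_symm_add, (Commute.refl _).inv_right.commutator_eq])
  add_comm x y := toBaer.symm.injective (by simpa [toBaer_symm_add] using baer_add_comm _ _)
  nsmul := nsmulRec
  zsmul := zsmulRec

theorem toBaer_pow (x : K) (m : ℕ) : toBaer (x ^ m) = m • (toBaer x : Baer K h) := by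
  induction m with
  | zero => exact toBaer.symm.injective (by simp)
  | succ m ih => rw [pow_succ, toBaer_mul_of_commute ((Commute.refl x).pow_left m), ih, succ_nsmul]

theorem nsmul_eq_zero_of_pow_eq_one {p : ℕ} (hexp : ∀ x : K, x ^ p = 1) (x : Baer K h) :
    p • x = 0 := by
  rw [← toBaer.apply_symm_apply x, ← toBaer_pow, hexp]
  exact toBaer.symm.injective (by simp)

def map [IsBaerGroup L h] (f : K →* L) : Baer K h →+ Baer L h where
  toFun x := toBaer (f (toBaer.symm x))
  map_zero' := toBaer.symm.injective (by simp)
  map_add' x y := toBaer.symm.injective (by simp [toBaer_symm_add])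

theorem map_toBaer [IsBaerGroup L h] (f : K →* L) (x : K) :
    map f (toBaer x : Baer K h) = toBaer (f x) := rfl

def toMulOfCommute (f : K →* L) (hf : ∀ x y, Commute (f x) (f y)) :
    Multiplicative (Baer K h) →* L where
  toFun x := f (toBaer.symm x.toAdd)
  map_one' := by simp
  map_mul' x y := by simp [toBaer_symm_add, (hf _ _).commutator_eq]

theorem toMulOfCommute_apply (f : K →* L) (hf : ∀ x y, Commute (f x) (f y))
    (x : Multiplicative (Baer K h)) : toMulOfCommute f hf x = f (toBaer.symm x.toAdd) := rfl

end

end Baer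

section Zassenhaus

variable {G K : Type*} [Group G] [Group K] {p : ℕ}

theorem pow_mem_zassenhaus {k : ℕ} (hk : k ≤ p) (x : G) : x ^ p ∈ zassenhaus p G k :=
  Subgroup.subset_closure ⟨1, 1, le_rfl, by simpa using hk, x, Subgroup.mem_top x, by simp⟩

theorem lowerCentralSeries_le_zassenhaus (k : ℕ) :
    (⊤ : Subgroup G).lowerCentralSeries k ≤ zassenhaus p G (k + 1) := fun x hx =>
  Subgroup.subset_closure ⟨k + 1, 0, by omega, by simp, x, hx, by simp⟩

theorem zassenhaus_le_ker {k : ℕ} (f : G →* K) (hexp : ∀ x : K, x ^ p = 1)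
    (hlcs : (⊤ : Subgroup K).lowerCentralSeries k = ⊥) : zassenhaus p G (k + 1) ≤ f.ker := by
  rw [zassenhaus, Subgroup.closure_le]
  rintro _ ⟨i, j, hi, hk, y, hy, rfl⟩
  rcases j with _ | j
  · have hy : f y ∈ (⊤ : Subgroup K).lowerCentralSeries k :=
      Subgroup.lowerCentralSeries_mono k le_top <| Subgroup.map_lowerCentralSeries _ f k ▸
        Subgroup.mem_map_of_mem f (Subgroup.lowerCentralSeries_antitone _ (by simp at hk; omega) hy)
    simp_all
  · simp [pow_succ, pow_mul, hexp]

theorem pow_eq_one_of_le_zassenhaus {k : ℕ} (hk : k ≤ p) (x : G ⧸ zassenhaus p G k) :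
    x ^ p = 1 := by
  induction x using QuotientGroup.induction_on with
  | H x => rw [← QuotientGroup.mk_pow, QuotientGroup.eq_one_iff]; exact pow_mem_zassenhaus hk x

theorem lowerCentralSeries_quotient_zassenhaus (k : ℕ) :
    (⊤ : Subgroup (G ⧸ zassenhaus p G (k + 1))).lowerCentralSeries k = ⊥ := by
  rw [← Subgroup.map_top_of_surjective _ (QuotientGroup.mk'_surjective _),
    ← Subgroup.map_lowerCentralSeries, Subgroup.map_eq_bot_iff, QuotientGroup.ker_mk']
  exact lowerCentralSeries_le_zassenhaus k

instance [Fact (3 ≤ p)] [Fact (Odd p)] : IsBaerGroup (G ⧸ zassenhaus p G 3) ((p + 1) / 2) where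
  commute_commutatorElement :=
    commute_commutatorElement_of_lowerCentralSeries_two_eq_bot
      (lowerCentralSeries_quotient_zassenhaus 2)
  commutatorElement_pow_two_mul x y := by
    rw [Nat.two_mul_div_two_of_even (Fact.out : Odd p).add_one, pow_succ,
      pow_eq_one_of_le_zassenhaus Fact.out, one_mul]

end Zassenhaus

abbrev FreeZassenhausQuotient (α : Type*) (p k : ℕ) : Type _ :=
  FreeGroup α ⧸ zassenhaus p (FreeGroup α) k

namespace FreeZassenhausQuotient

variable {α K : Type*} [Group K] {p k : ℕ}

def of (a : α) : FreeZassenhausQuotient α p k := QuotientGroup.mk (FreeGroup.of a)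

theorem hom_ext {M : Type*} [Monoid M] {f g : FreeZassenhausQuotient α p k →* M}
    (h : ∀ a, f (of a) = g (of a)) : f = g :=
  QuotientGroup.monoidHom_ext _ (FreeGroup.ext_hom _ _ h)

def lift (x : α → K) (hexp : ∀ y : K, y ^ p = 1)
    (hlcs : (⊤ : Subgroup K).lowerCentralSeries k = ⊥) :
    FreeZassenhausQuotient α p (k + 1) →* K :=
  QuotientGroup.lift _ (FreeGroup.lift x) (zassenhaus_le_ker _ hexp hlcs)

@[simp]
theorem lift_of (x : α → K) (hexp : ∀ y : K, y ^ p = 1)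
    (hlcs : (⊤ : Subgroup K).lowerCentralSeries k = ⊥) (a : α) :
    lift x hexp hlcs (of a) = x a := by
  simp [lift, of]

@[simp]
theorem zassenhausProj_of {k' : ℕ} (h : k ≤ k') (a : α) :
    zassenhausProj p (FreeGroup α) k k' h (of a) = of a := rfl

end FreeZassenhausQuotient

open FreeZassenhausQuotient Baer

section Splitting

variable {α : Type*} {p : ℕ} [Fact (3 ≤ p)] [Fact (Odd p)]

local notation "G₂" => FreeZassenhausQuotient α p 2
local notation "G₃" => FreeZassenhausQuotient α p 3

def baerLift : G₂ →* Multiplicative (Baer G₃ ((p + 1) / 2)) :=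
  lift (fun a => .ofAdd (toBaer (of a)))
    (fun y => Multiplicative.toAdd.injective
      (nsmul_eq_zero_of_pow_eq_one (pow_eq_one_of_le_zassenhaus Fact.out) y.toAdd))
    (Subgroup.lowerCentralSeries_one_eq_bot_iff.mpr inferInstance)

def canonicalLift (y : G₂) : G₃ := toBaer.symm (baerLift y).toAdd

theorem baerLift_apply (y : G₂) : baerLift y = .ofAdd (toBaer (canonicalLift y)) := rfl

@[simp]
theorem canonicalLift_of (a : α) : canonicalLift (of a : G₂) = of a := by
  simp [canonicalLift, baerLift]

theorem zassenhausProj_canonicalLift (y : G₂) :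
    zassenhausProj p (FreeGroup α) 2 3 (Nat.le_succ 2) (canonicalLift y) = y := by
  have hcomm : ∀ x y : G₂, Commute x y :=
    (Subgroup.lowerCentralSeries_one_eq_bot_iff.mp
      (lowerCentralSeries_quotient_zassenhaus 1)).is_comm.comm
  have : (toMulOfCommute (zassenhausProj p (FreeGroup α) 2 3 (Nat.le_succ 2))
      fun _ _ => hcomm _ _).comp baerLift = MonoidHom.id G₂ := by
    refine hom_ext fun a => ?_
    simp [baerLift_apply, toMulOfCommute_apply]
  exact DFunLike.congr_fun this y

def liftEnd (φ : MulAut G₂) : G₃ →* G₃ :=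
  lift (fun a => canonicalLift (φ (of a))) (pow_eq_one_of_le_zassenhaus Fact.out)
    (lowerCentralSeries_quotient_zassenhaus 2)

@[simp]
theorem liftEnd_of (φ : MulAut G₂) (a : α) : liftEnd φ (of a) = canonicalLift (φ (of a)) := by
  simp [liftEnd]

theorem liftEnd_canonicalLift (φ : MulAut G₂) (y : G₂) :
    liftEnd φ (canonicalLift y) = canonicalLift (φ y) := by
  have : (Baer.map (liftEnd φ)).toMultiplicative.comp baerLift = baerLift.comp φ.toMonoidHom := by
    refine hom_ext fun a => ?_
    simp [baerLift_apply, map_toBaer]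
  exact congrArg (fun b => toBaer.symm b.toAdd) (DFunLike.congr_fun this y)

theorem liftEnd_mul (φ ψ : MulAut G₂) : liftEnd (φ * ψ) = (liftEnd φ).comp (liftEnd ψ) := by
  refine hom_ext fun a => ?_
  simp [liftEnd_canonicalLift]

theorem liftEnd_one : liftEnd (1 : MulAut G₂) = MonoidHom.id G₃ := by
  refine hom_ext fun a => ?_
  simp

theorem zassenhausProj_comp_liftEnd (φ : MulAut G₂) :
    (zassenhausProj p (FreeGroup α) 2 3 (Nat.le_succ 2)).comp (liftEnd φ) =
      φ.toMonoidHom.comp (zassenhausProj p (FreeGroup α) 2 3 (Nat.le_succ 2)) := by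
  refine hom_ext fun a => ?_
  simp [zassenhausProj_canonicalLift]

def liftAut : MulAut G₂ →* MulAut G₃ :=
  MonoidHom.mk' (fun φ => (liftEnd φ).toMulEquiv (liftEnd φ⁻¹)
      (by rw [← liftEnd_mul, inv_mul_cancel, liftEnd_one])
      (by rw [← liftEnd_mul, mul_inv_cancel, liftEnd_one]))
    fun φ ψ => MulEquiv.ext fun x => by simp [liftEnd_mul]

end Splitting

theorem zassenhaus_aut_extension_splits (n p : ℕ) (hp : p.Prime) (hodd : Odd p) :
    ∃ s : MulAut (FreeGroup (Fin n) ⧸ zassenhaus p (FreeGroup (Fin n)) 2) →*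
        MulAut (FreeGroup (Fin n) ⧸ zassenhaus p (FreeGroup (Fin n)) 3),
      ∀ φ x, zassenhausProj p (FreeGroup (Fin n)) 2 3 (Nat.le_succ _) (s φ x) =
        φ (zassenhausProj p (FreeGroup (Fin n)) 2 3 (Nat.le_succ _) x) := by
  have := Fact.mk (hp.odd_iff.mp hodd)
  have := Fact.mk hodd
  exact ⟨liftAut, fun φ => DFunLike.congr_fun (zassenhausProj_comp_liftEnd φ)⟩
end

section
/- Let g ≥ 4 and let A be an abelian group. Let H = ℤ^{2g} with standard basis a_1,…,a_g,b_1,…,b_g, and for G ∈ GL_g(ℤ) let φ_G be the automorphism of H given by the block-diagonal matrix diag(G, ᵗG⁻¹), acting by G on the span of a_1,…,a_g and by the inverse transpose ᵗG⁻¹ on the span of b_1,…,b_g. If f : ⋀³H → A is a homomorphism of abelian groups such that f ∘ ⋀³φ_G = f for every G ∈ GL_g(ℤ), then f = 0. -/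
open Matrix

theorem exteriorPower_map_mem {R : Type*} [CommRing R] {M N : Type*} [AddCommGroup M]
    [Module R M] [AddCommGroup N] [Module R N] (f : M →ₗ[R] N) (n : ℕ)
    {x : ExteriorAlgebra R M} (hx : x ∈ ⋀[R]^n M) :
    ExteriorAlgebra.map f x ∈ ⋀[R]^n N := by
  have h1 : Submodule.map (ExteriorAlgebra.map f).toLinearMap (⋀[R]^n M) ≤ ⋀[R]^n N := by
    rw [ExteriorAlgebra.exteriorPower, ExteriorAlgebra.exteriorPower, Submodule.map_pow, ExteriorAlgebra.ι_range_map_map]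
    refine pow_le_pow_left' ?_ n
    rw [LinearMap.range_eq_map (ExteriorAlgebra.ι R)]
    exact Submodule.map_mono le_top
  exact h1 ⟨x, hx, rfl⟩

/-- The linear map `⋀[R]^n M →ₗ[R] ⋀[R]^n N` induced by a linear map `f : M →ₗ[R] N`. -/
noncomputable def extPowerMap {R : Type*} [CommRing R] {M N : Type*} [AddCommGroup M]
    [Module R M] [AddCommGroup N] [Module R N] (n : ℕ) (f : M →ₗ[R] N) :
    (⋀[R]^n M) →ₗ[R] (⋀[R]^n N) :=
  (ExteriorAlgebra.map f).toLinearMap.restrict fun _ hx => exteriorPower_map_mem f n hx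

/-- For `G ∈ GL_g(ℤ)`, the automorphism of `H = ℤ^g × ℤ^g` given by the block-diagonal
matrix `diag(G, ᵗG⁻¹)`: it acts by `G` on the first factor (the span of `a_1, …, a_g`)
and by the inverse transpose `ᵗG⁻¹` on the second factor (the span of `b_1, …, b_g`). -/
noncomputable def phiGL (g : ℕ) (G : GL (Fin g) ℤ) :
    ((Fin g → ℤ) × (Fin g → ℤ)) →ₗ[ℤ] ((Fin g → ℤ) × (Fin g → ℤ)) :=
  LinearMap.prodMap (Matrix.toLin' (G : Matrix (Fin g) (Fin g) ℤ))
    (Matrix.toLin' ((↑(G⁻¹) : Matrix (Fin g) (Fin g) ℤ)ᵀ))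

/-! Write `F := f ∘ ιMulti` as an alternating 3-form on `H`; it suffices that `F` vanishes on
distinct basis vectors. Among three distinct vectors of `a_1, …, b_g` one, say `a_i` (or `b_i`),
has its partner `b_i` (resp. `a_i`) missing, because the partner involution has no fixed points
and 3 is odd; and since `g ≥ 4` some index `m` is unused. The transvection `1 + E_{im}` then
fixes the other two vectors and sends `a_m` to `a_m + a_i` (resp. `b_m` to `b_m - b_i` for
`1 + E_{mi}`), so invariance and multilinearity force `F = 0` on the triple. -/
theorem Function.Involutive.exists_apply_notMem_range {α : Type*} {σ : α → α}
    (hσ : Involutive σ) (hfix : ∀ a, σ a ≠ a) {n : ℕ} (hn : Odd n) {v : Fin n → α}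
    (hv : Injective v) : ∃ t, σ (v t) ∉ Set.range v := by
  by_contra! h
  choose s hs using h
  have hs_invol : Involutive s := fun t => hv <| by rw [hs, hs, hσ]
  obtain ⟨t, ht⟩ := Equiv.Perm.exists_fixed_point_of_prime (p := 2) (n := 1)
    (σ := hs_invol.toPerm) (by simpa [← even_iff_two_dvd] using hn)
    (by ext t; simp [sq, hs_invol t])
  exact hfix (v t) (by rw [← hs, show s t = t from ht])

theorem MultilinearMap.map_eq_zero_of_shear {R M N ι : Type*} [CommRing R] [AddCommGroup M]
    [Module R M] [AddCommGroup N] [Module R N] [DecidableEq ι]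
    (F : MultilinearMap R (fun _ : ι => M) N) (φ : M →ₗ[R] M) (hF : ∀ v, F (φ ∘ v) = F v)
    (v : ι → M) (t : ι) (x : M) (hx : φ x = x + v t) (hv : ∀ s ≠ t, φ (v s) = v s) :
    F v = 0 := by
  have hφ : φ ∘ Function.update v t x = Function.update v t (x + v t) := by
    ext s
    rcases eq_or_ne s t with rfl | hs
    · simp [hx]
    · simp [hs, hv s hs]
  have := hF (Function.update v t x)
  rw [hφ, F.map_update_add, Function.update_eq_self] at this
  exact add_eq_left.mp this

lemma extPowerMap_apply_ιMulti {R M N : Type*} [CommRing R] [AddCommGroup M] [Module R M]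
    [AddCommGroup N] [Module R N] (n : ℕ) (φ : M →ₗ[R] N) (v : Fin n → M) :
    extPowerMap n φ (exteriorPower.ιMulti R n v) = exteriorPower.ιMulti R n (φ ∘ v) :=
  Subtype.ext (ExteriorAlgebra.map_apply_ιMulti φ v)

noncomputable def Matrix.transvectionGL {n R : Type*} [Fintype n] [DecidableEq n] [CommRing R]
    (i j : n) (hij : i ≠ j) : GL n R where
  val := transvection i j 1
  inv := transvection i j (-1)
  val_inv := by simp [transvection_mul_transvection_same _ _ hij, transvection_zero]
  inv_val := by simp [transvection_mul_transvection_same _ _ hij, transvection_zero]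

noncomputable abbrev stdBasisProd (g : ℕ) :
    Module.Basis (Fin g ⊕ Fin g) ℤ ((Fin g → ℤ) × (Fin g → ℤ)) :=
  (Pi.basisFun ℤ (Fin g)).prod (Pi.basisFun ℤ (Fin g))

section transvection

variable {g : ℕ} (i j : Fin g) (hij : i ≠ j)

lemma phiGL_transvectionGL_inl_self :
    phiGL g (transvectionGL i j hij) (stdBasisProd g (.inl j)) =
      stdBasisProd g (.inl j) + stdBasisProd g (.inl i) := by
  ext p <;> simp [phiGL, transvectionGL, transvection, mulVec_single, Pi.single_apply, single_apply,
    eq_comm]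

lemma phiGL_transvectionGL_inl_of_ne {q : Fin g} (hq : q ≠ j) :
    phiGL g (transvectionGL i j hij) (stdBasisProd g (.inl q)) = stdBasisProd g (.inl q) := by
  ext p <;> simp [phiGL, transvectionGL, transvection, mulVec_single, Pi.single_apply, eq_comm,
    hq.symm]

lemma phiGL_transvectionGL_inr_self :
    phiGL g (transvectionGL i j hij) (stdBasisProd g (.inr i)) =
      stdBasisProd g (.inr i) - stdBasisProd g (.inr j) := by
  ext p <;> simp [phiGL, transvectionGL, transvection, mulVec_single, Pi.single_apply, single_apply,
    eq_comm]
  split_ifs <;> simp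

lemma phiGL_transvectionGL_inr_of_ne {q : Fin g} (hq : q ≠ i) :
    phiGL g (transvectionGL i j hij) (stdBasisProd g (.inr q)) = stdBasisProd g (.inr q) := by
  ext p <;> simp [phiGL, transvectionGL, transvection, mulVec_single, Pi.single_apply, eq_comm,
    hq.symm]

end transvection

lemma exists_phiGL_shear {g : ℕ} (e : Fin g ⊕ Fin g) (m : Fin g) (hm : Sum.elim id id e ≠ m) :
    ∃ G x, phiGL g G x = x + stdBasisProd g e ∧ ∀ e', Sum.elim id id e' ≠ m → e' ≠ e.swap →
      phiGL g G (stdBasisProd g e') = stdBasisProd g e' := by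
  rcases e with i | i
  · refine ⟨transvectionGL i m hm, _, phiGL_transvectionGL_inl_self i m hm, ?_⟩
    rintro (q | q) hq hqi
    · exact phiGL_transvectionGL_inl_of_ne i m hm hq
    · exact phiGL_transvectionGL_inr_of_ne i m hm (by simpa using hqi)
  -- `ᵗG⁻¹` acts on the `b`'s, so there the transvection shears in the direction `-b_m`.
  · refine ⟨transvectionGL m i (Ne.symm hm), -stdBasisProd g (.inr m), ?_, ?_⟩
    · rw [map_neg, phiGL_transvectionGL_inr_self]
      abel
    rintro (q | q) hq hqi
    · exact phiGL_transvectionGL_inl_of_ne m i _ (by simpa using hqi)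
    · exact phiGL_transvectionGL_inr_of_ne m i _ hq

theorem AlternatingMap.eq_zero_of_forall_phiGL_invariant {g n : ℕ} (hn : Odd n) (hng : n < g)
    {A : Type*} [AddCommGroup A] (F : ((Fin g → ℤ) × (Fin g → ℤ)) [⋀^Fin n]→ₗ[ℤ] A)
    (hF : ∀ G v, F (phiGL g G ∘ v) = F v) : F = 0 := by
  refine (stdBasisProd g).ext_alternating fun v hv => ?_
  obtain ⟨t, ht⟩ := Function.Involutive.exists_apply_notMem_range Sum.swap_swap
    (by rintro (a | a) <;> simp) hn hv
  obtain ⟨m, hm⟩ : ∃ m, ∀ s, Sum.elim id id (v s) ≠ m := by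
    by_contra! h
    have := Fintype.card_le_of_surjective _ h
    simp only [Fintype.card_fin] at this
    omega
  obtain ⟨G, x, hx, hfix⟩ := exists_phiGL_shear (v t) m (hm t)
  exact F.toMultilinearMap.map_eq_zero_of_shear (phiGL g G) (hF G) _ t x hx
    fun s _ => hfix _ (hm s) fun h => ht ⟨s, h⟩

theorem gl_invariant_hom_of_ext_cube_is_zero (g : ℕ) (hg : 4 ≤ g)
    (A : Type*) [AddCommGroup A]
    (f : (⋀[ℤ]^3 ((Fin g → ℤ) × (Fin g → ℤ))) →+ A)
    (hf : ∀ (G : GL (Fin g) ℤ) (v : ⋀[ℤ]^3 ((Fin g → ℤ) × (Fin g → ℤ))),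
      f (extPowerMap 3 (phiGL g G) v) = f v) :
    f = 0 := by
  have hF : f.toIntLinearMap.compAlternatingMap (exteriorPower.ιMulti ℤ 3) = 0 :=
    AlternatingMap.eq_zero_of_forall_phiGL_invariant (by decide) hg _ fun G v => by
      simp [← extPowerMap_apply_ιMulti, hf]
  have : f.toIntLinearMap = 0 := exteriorPower.linearMap_ext (by rw [hF]; ext; simp)
  ext x
  exact LinearMap.congr_fun this x
end
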